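/- Let k ≥ 1 and let S, N, D : Fin k → ℕ with S_j ≥ 1 for all j. Let R be a commutative ring and, for each j ∈ Fin k and i ∈ Fin (S_j), let a_{j,i}, b_{j,i} ∈ R. Let ι = Σ j, Fin (S_j) and define the square matrix M over R with rows and columns indexed by ι ⊕ ι (relator rows inl(j,i) and commutator rows inr(j,i); a-columns inl(j,i) and b-columns inr(j,i)) by: relator row (j,i) has −g_{N_j}(a_{j,i}) in a-column (j,i) and −(a_{j,i})^{N_j}·g_{D_j}(b_{j,i}) in b-column (j,i), and, when j ≥ 1, additionally has +g_{N_j}(a_{j−1,L}) in a-column (j−1,L) and +(a_{j−1,L})^{N_j}·g_{D_j}(b_{j−1,L}) in b-column (j−1,L), where L = S_{j−1}−1 is the last index of family j−1; commutator row (j,i) has 1 − b_{j,i} in a-column (j,i) and a_{j,i} − 1 in b-column (j,i); all other entries are 0. Then det M = ∏_{j ∈ Fin k} ∏_{i ∈ Fin (S_j)} (1 − (a_{j,i})^{N_j}·(b_{j,i})^{D_j}). (This is the Type I minor of the Alexander matrix of the surgerized tst link [Φ_{j=1}^k(n(τ_j), d(τ_j), M_j, μ_j)] with M_k odd, obtained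 by deleting the column of a₀.) -/

import Mathlib

/-!
Order the strands `(j, i)` lexicographically and give the `a`- and `b`-column (and the relator
and commutator row) of a strand the same weight. A relator row of family `j` only reaches back
to the last strand of family `j - 1`, so `M` is block lower triangular with `2 × 2` diagonal
blocks `[[-g_N(a), -aᴺ g_D(b)], [1 - b, a - 1]]`, and `(1 - x) g_m(x) = 1 - xᵐ` turns the
determinant of such a block into `1 - aᴺ bᴰ`.
-/

/-- The geometric sum `g_m(x) = ∑_{k=0}^{m-1} xᵏ`, the group-ring analogue of `(1-xᵐ)/(1-x)`. -/
def geomSum {R : Type*} [CommRing R] (m : ℕ) (x : R) : R := ∑ k ∈ Finset.range m, x ^ k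

namespace Matrix

variable {R : Type*} [CommRing R]

theorem det_of_forall_eq_or_eq {m : Type*} [DecidableEq m] [Fintype m] (A : Matrix m m R)
    {x y : m} (hxy : x ≠ y) (h : ∀ z, z = x ∨ z = y) :
    A.det = A x x * A y y - A x y * A y x := by
  have hbij : Function.Bijective ![x, y] := by
    refine ⟨fun i i' hii' => ?_, fun z => ?_⟩
    · fin_cases i <;> fin_cases i' <;> simp_all [eq_comm]
    · rcases h z with rfl | rfl
      exacts [⟨0, rfl⟩, ⟨1, rfl⟩]
  rw [← det_submatrix_equiv_self (Equiv.ofBijective _ hbij), det_fin_two]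
  rfl

theorem BlockTriangular.det_sum_elim {ι α : Type*} [Fintype ι] [DecidableEq ι] [LinearOrder α]
    {w : ι → α} (hw : Function.Injective w) {M : Matrix (ι ⊕ ι) (ι ⊕ ι) R}
    (hM : M.BlockTriangular (Sum.elim w w)) :
    M.det = ∏ p, (M (.inl p) (.inl p) * M (.inr p) (.inr p)
      - M (.inl p) (.inr p) * M (.inr p) (.inl p)) := by
  have himage : Finset.univ.image (Sum.elim w w) = Finset.univ.image w := by
    ext; simp [Sum.exists]
  rw [hM.det, himage, Finset.prod_image hw.injOn]
  refine Finset.prod_congr rfl fun p _ => ?_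
  let x : {z // Sum.elim w w z = w p} := ⟨.inl p, rfl⟩
  let y : {z // Sum.elim w w z = w p} := ⟨.inr p, rfl⟩
  refine det_of_forall_eq_or_eq _ (x := x) (y := y) (by simp [x, y, Subtype.ext_iff]) ?_
  rintro ⟨q | q, hq⟩ <;> simp only [Sum.elim_inl, Sum.elim_inr, hw.eq_iff] at hq <;> subst hq <;>
    simp [x, y]

end Matrix

theorem geomSum_mul_sub_one {R : Type*} [CommRing R] (m : ℕ) (x : R) :
    geomSum m x * (x - 1) = x ^ m - 1 :=
  geom_sum_mul x m

theorem one_sub_pow_mul_pow_eq_geomSum {R : Type*} [CommRing R] (n d : ℕ) (x y : R) :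
    1 - x ^ n * y ^ d = -geomSum n x * (x - 1) + x ^ n * geomSum d y * (1 - y) := by
  linear_combination geomSum_mul_sub_one n x + x ^ n * geomSum_mul_sub_one d y

open Matrix in
theorem typeI_minor_stst_odd_general {R : Type*} [CommRing R] (k : ℕ)
    (S N D : Fin k → ℕ)
    (a b : (j : Fin k) → Fin (S j) → R)
    (M : Matrix ((Σ j : Fin k, Fin (S j)) ⊕ (Σ j : Fin k, Fin (S j)))
                ((Σ j : Fin k, Fin (S j)) ⊕ (Σ j : Fin k, Fin (S j))) R)
    (h_ra : ∀ (j : Fin k) (i : Fin (S j)) (p : Σ j' : Fin k, Fin (S j')),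
      M (Sum.inl ⟨j, i⟩) (Sum.inl p) =
        if p = ⟨j, i⟩ then -(geomSum (N j) (a j i))
        else if 1 ≤ (j : ℕ) ∧ (p.1 : ℕ) + 1 = (j : ℕ) ∧ (p.2 : ℕ) + 1 = S p.1 then
          geomSum (N j) (a p.1 p.2)
        else 0)
    (h_rb : ∀ (j : Fin k) (i : Fin (S j)) (p : Σ j' : Fin k, Fin (S j')),
      M (Sum.inl ⟨j, i⟩) (Sum.inr p) =
        if p = ⟨j, i⟩ then -((a j i) ^ (N j) * geomSum (D j) (b j i))
        else if 1 ≤ (j : ℕ) ∧ (p.1 : ℕ) + 1 = (j : ℕ) ∧ (p.2 : ℕ) + 1 = S p.1 then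
          (a p.1 p.2) ^ (N j) * geomSum (D j) (b p.1 p.2)
        else 0)
    (h_sa : ∀ (j : Fin k) (i : Fin (S j)) (p : Σ j' : Fin k, Fin (S j')),
      M (Sum.inr ⟨j, i⟩) (Sum.inl p) = if p = ⟨j, i⟩ then 1 - b j i else 0)
    (h_sb : ∀ (j : Fin k) (i : Fin (S j)) (p : Σ j' : Fin k, Fin (S j')),
      M (Sum.inr ⟨j, i⟩) (Sum.inr p) = if p = ⟨j, i⟩ then a j i - 1 else 0) :
    M.det = ∏ j : Fin k, ∏ i : Fin (S j), (1 - (a j i) ^ (N j) * (b j i) ^ (D j)) := by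
  have hlower : Mᵀ.BlockTriangular (Sum.elim toLex toLex) := by
    rintro c (⟨j, i⟩ | ⟨j, i⟩) hlt <;> rcases c with p | p <;>
    · simp only [Sum.elim_inl, Sum.elim_inr] at hlt
      have hne : p ≠ ⟨j, i⟩ := by rintro rfl; exact lt_irrefl _ hlt
      have hprev : ¬(p.1 : ℕ) + 1 = j := fun h =>
        hlt.not_gt (Sigma.Lex.lt_def.2 (Or.inl (show p.1 < j from Fin.lt_def.2 (by omega))))
      simp [h_ra, h_rb, h_sa, h_sb, hne, hprev]
  rw [← det_transpose, hlower.det_sum_elim toLex.injective, Fintype.prod_sigma]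
  refine Finset.prod_congr rfl fun j _ => Finset.prod_congr rfl fun i _ => ?_
  simp only [transpose_apply, h_ra, h_rb, h_sa, h_sb, ↓reduceIte]
  rw [one_sub_pow_mul_pow_eq_geomSum]
  ring

open Matrix in
/-- Type I minor of the Alexander matrix of a surgerized tst link with `M_k` odd,
obtained by deleting the column of `a₀`.  Rows `Sum.inl ⟨j,i⟩` are the relator rows,
rows `Sum.inr ⟨j,i⟩` the commutator rows; columns `Sum.inl` are the `a`-columns and
columns `Sum.inr` the `b`-columns. -/
theorem typeI_minor_stst_odd {R : Type*} [CommRing R] (k : ℕ) (hk : 1 ≤ k)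
    (S N D : Fin k → ℕ) (hS : ∀ j, 1 ≤ S j)
    (a b : (j : Fin k) → Fin (S j) → R)
    (M : Matrix ((Σ j : Fin k, Fin (S j)) ⊕ (Σ j : Fin k, Fin (S j)))
                ((Σ j : Fin k, Fin (S j)) ⊕ (Σ j : Fin k, Fin (S j))) R)
    (h_ra : ∀ (j : Fin k) (i : Fin (S j)) (p : Σ j' : Fin k, Fin (S j')),
      M (Sum.inl ⟨j, i⟩) (Sum.inl p) =
        if p = ⟨j, i⟩ then -(geomSum (N j) (a j i))
        else if 1 ≤ (j : ℕ) ∧ (p.1 : ℕ) + 1 = (j : ℕ) ∧ (p.2 : ℕ) + 1 = S p.1 then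
          geomSum (N j) (a p.1 p.2)
        else 0)
    (h_rb : ∀ (j : Fin k) (i : Fin (S j)) (p : Σ j' : Fin k, Fin (S j')),
      M (Sum.inl ⟨j, i⟩) (Sum.inr p) =
        if p = ⟨j, i⟩ then -((a j i) ^ (N j) * geomSum (D j) (b j i))
        else if 1 ≤ (j : ℕ) ∧ (p.1 : ℕ) + 1 = (j : ℕ) ∧ (p.2 : ℕ) + 1 = S p.1 then
          (a p.1 p.2) ^ (N j) * geomSum (D j) (b p.1 p.2)
        else 0)
    (h_sa : ∀ (j : Fin k) (i : Fin (S j)) (p : Σ j' : Fin k, Fin (S j')),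
      M (Sum.inr ⟨j, i⟩) (Sum.inl p) = if p = ⟨j, i⟩ then 1 - b j i else 0)
    (h_sb : ∀ (j : Fin k) (i : Fin (S j)) (p : Σ j' : Fin k, Fin (S j')),
      M (Sum.inr ⟨j, i⟩) (Sum.inr p) = if p = ⟨j, i⟩ then a j i - 1 else 0) :
    M.det = ∏ j : Fin k, ∏ i : Fin (S j), (1 - (a j i) ^ (N j) * (b j i) ^ (D j)) :=
  typeI_minor_stst_odd_general k S N D a b M h_ra h_rb h_sa h_sb
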